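/- Let M ≥ 1 and let q₀^{(j)}, q₁^{(j)} (0 ≤ j ≤ M−1) and e₀ be positive real numbers. Define α_{−1} = 1, α₀ = e₀ + q₁^{(M−1)}, and α_i = α_{i−1} q₁^{(M−i−1)} + e₀ ∏_{j=0}^{i−1} q₀^{(M−j−1)} for 1 ≤ i ≤ M−1. Set q̃₀^{(i)} = q₁^{(i)} q₀^{(i)} α_{M−2−i} / α_{M−1−i} and q̃₁^{(i)} = α_{M−1−i} / α_{M−2−i} for 0 ≤ i ≤ M−1. Define β₀ = 1 and β_i = β_{i−1} q₀^{(i)} + ∏_{j=0}^{i−1} q₁^{(j)} for 1 ≤ i ≤ M−1, and define β̃_i by the same recursion with q̃₀, q̃₁ in place of q₀, q₁. Then β̃_i = β_i for every 0 ≤ i ≤ M−1; that is, the quantities β_i are conserved by the birational transformation. -/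

import Mathlib

/-!
Write `A k` for `alphaS M q0 q1 e0 k`, `Pᵢ = ∏_{j ≤ i} q1 j` and `Q k = ∏_{j < k} q0 (M - j - 1)`.
Unfolding the recursion of `A` from the top, `A M = Pᵢ · A (M - 1 - i) + e0 · βᵢ · Q (M - 1 - i)`:
the coefficients of `e0` produced along the way obey exactly the recursion of `β`.
Since the `q̃1` telescope to `∏_{j ≤ i} q̃1 j = A M / A (M - 1 - i)`, the recursion for `β̃`
becomes, after clearing denominators, one step of this identity.
-/

/-- `alphaS M q0 q1 e0 (i+1) = α_i` of the paper, with the convention `alphaS M q0 q1 e0 0 = α_{-1} = 1`: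
`α_0 = e0 + q1^{(M-1)}`, `α_i = α_{i-1} q1^{(M-i-1)} + e0 ∏_{j<i} q0^{(M-j-1)}`. -/
noncomputable def alphaS (M : ℕ) (q0 q1 : ℕ → ℝ) (e0 : ℝ) : ℕ → ℝ
  | 0 => 1
  | 1 => e0 + q1 (M - 1)
  | i + 2 => alphaS M q0 q1 e0 (i + 1) * q1 (M - i - 2) +
      e0 * ∏ j ∈ Finset.range (i + 1), q0 (M - j - 1)

/-- `betaRec q0 q1 i = β_i`: `β_0 = 1`, `β_i = β_{i-1} q0^{(i)} + ∏_{j<i} q1^{(j)}`. -/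
noncomputable def betaRec (q0 q1 : ℕ → ℝ) : ℕ → ℝ
  | 0 => 1
  | i + 1 => betaRec q0 q1 i * q0 (i + 1) + ∏ j ∈ Finset.range (i + 1), q1 j

open Finset

theorem prod_range_div_succ_of_ne_zero {K : Type*} [Field K] (f : ℕ → K) :
    ∀ n, (∀ j ≤ n, f j ≠ 0) → ∏ j ∈ range n, f j / f (j + 1) = f 0 / f n
  | 0, hf => by simp [hf 0 le_rfl]
  | n + 1, hf => by
    rw [prod_range_succ, prod_range_div_succ_of_ne_zero f n fun j hj => hf j (by omega)]
    field_simp [hf n (by omega)]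

section

variable (M : ℕ) (q0 q1 : ℕ → ℝ) (e0 : ℝ)

theorem alphaS_succ (k : ℕ) :
    alphaS M q0 q1 e0 (k + 1) =
      alphaS M q0 q1 e0 k * q1 (M - (k + 1)) + e0 * ∏ j ∈ range k, q0 (M - j - 1) := by
  cases k with
  | zero => simp [alphaS, add_comm]
  | succ k => rw [alphaS, show M - k - 2 = M - (k + 1 + 1) by omega]

variable {M q0 q1 e0}

theorem alphaS_pos (hq0 : ∀ j < M, 0 < q0 j) (hq1 : ∀ j < M, 0 < q1 j) (he0 : 0 < e0) :
    ∀ k ≤ M, 0 < alphaS M q0 q1 e0 k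
  | 0, _ => by simp [alphaS]
  | k + 1, hk => by
    have hA := alphaS_pos hq0 hq1 he0 k (by omega)
    have hq1k := hq1 (M - (k + 1)) (by omega)
    have hQ : 0 < ∏ j ∈ range k, q0 (M - j - 1) :=
      prod_pos fun j hj => hq0 _ (by have := mem_range.mp hj; omega)
    rw [alphaS_succ]
    positivity

theorem alphaS_self_eq_prod_mul_add {i k : ℕ} (h : i + k + 1 = M) :
    alphaS M q0 q1 e0 M =
      (∏ j ∈ range (i + 1), q1 j) * alphaS M q0 q1 e0 k +
        e0 * betaRec q0 q1 i * ∏ j ∈ range k, q0 (M - j - 1) := by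
  induction i generalizing k with
  | zero =>
    obtain rfl : M = k + 1 := by omega
    rw [alphaS_succ, Nat.sub_self]
    simp only [zero_add, range_one, prod_singleton, betaRec]
    ring
  | succ i ih =>
    rw [ih (k := k + 1) (by omega), alphaS_succ, prod_range_succ (fun j => q0 (M - j - 1)) k,
      prod_range_succ q1 (i + 1),
      show M - (k + 1) = i + 1 by omega, show M - k - 1 = i + 1 by omega, betaRec]
    ring

theorem prod_alphaS_div (hA : ∀ k ≤ M, alphaS M q0 q1 e0 k ≠ 0) (i : ℕ) :
    ∏ j ∈ range (i + 1), alphaS M q0 q1 e0 (M - j) / alphaS M q0 q1 e0 (M - 1 - j) =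
      alphaS M q0 q1 e0 M / alphaS M q0 q1 e0 (M - 1 - i) := by
  have h := prod_range_div_succ_of_ne_zero (fun j => alphaS M q0 q1 e0 (M - j)) (i + 1)
    fun j _ => hA _ (Nat.sub_le _ _)
  simpa only [Nat.sub_zero, Nat.sub_sub, add_comm 1] using h

end

theorem stmt_11_general (M : ℕ) (q0 q1 : ℕ → ℝ) (e0 : ℝ)
    (hq0 : ∀ j < M, 0 < q0 j) (hq1 : ∀ j < M, 0 < q1 j) (he0 : 0 < e0) :
    let qt0 : ℕ → ℝ := fun i =>
      q1 i * q0 i * alphaS M q0 q1 e0 (M - 1 - i) / alphaS M q0 q1 e0 (M - i)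
    let qt1 : ℕ → ℝ := fun i =>
      alphaS M q0 q1 e0 (M - i) / alphaS M q0 q1 e0 (M - 1 - i)
    ∀ i < M, betaRec qt0 qt1 i = betaRec q0 q1 i := by
  intro qt0 qt1 i hi
  have hA : ∀ k ≤ M, alphaS M q0 q1 e0 k ≠ 0 := fun k hk => (alphaS_pos hq0 hq1 he0 k hk).ne'
  induction i with
  | zero => rfl
  | succ n ih =>
    obtain ⟨k, hk⟩ : ∃ k, n + k + 2 = M := ⟨M - n - 2, by omega⟩
    have hself := alphaS_self_eq_prod_mul_add (q0 := q0) (q1 := q1) (e0 := e0) (i := n) (k := k + 1) (by omega)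
    rw [prod_range_succ (fun j => q0 (M - j - 1)), show M - k - 1 = n + 1 by omega] at hself
    have hrec := alphaS_succ M q0 q1 e0 k
    rw [show M - (k + 1) = n + 1 by omega] at hrec
    rw [betaRec, betaRec, ih (by omega), prod_alphaS_div hA]
    simp only [qt0, show M - 1 - n = k + 1 by omega, show M - 1 - (n + 1) = k by omega,
      show M - (n + 1) = k + 1 by omega]
    field_simp [hA (k + 1) (by omega)]
    linear_combination hself - betaRec q0 q1 n * q0 (n + 1) * hrec

/-- the quantities `β_i` are conserved by the birational transformation
`q̃0^{(i)} = q1^{(i)} q0^{(i)} α_{M-2-i}/α_{M-1-i}`, `q̃1^{(i)} = α_{M-1-i}/α_{M-2-i}`. -/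
theorem stmt_11 (M : ℕ) (hM : 1 ≤ M) (q0 q1 : ℕ → ℝ) (e0 : ℝ)
    (hq0 : ∀ j < M, 0 < q0 j) (hq1 : ∀ j < M, 0 < q1 j) (he0 : 0 < e0) :
    let qt0 : ℕ → ℝ := fun i =>
      q1 i * q0 i * alphaS M q0 q1 e0 (M - 1 - i) / alphaS M q0 q1 e0 (M - i)
    let qt1 : ℕ → ℝ := fun i =>
      alphaS M q0 q1 e0 (M - i) / alphaS M q0 q1 e0 (M - 1 - i)
    ∀ i < M, betaRec qt0 qt1 i = betaRec q0 q1 i :=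
  stmt_11_general M q0 q1 e0 hq0 hq1 he0
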